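/- arXiv:1902.01794 — 2 statements merged into one kernel-verified Lean document; each statement's English description precedes it below -/
import Mathlib

section
/- Let m, n ≥ 1 be integers, let 𝔬, π, I, (r_ι), r, (ν_k) be as in the type data, and let α ∈ GLₙ(𝔬) with columns α^{(1)},…,α^{(n)} ∈ 𝔬ⁿ. Write a row vector g ∈ 𝔬^{d(m,n)} as g = (g⁽¹⁾, g⁽²⁾) with g⁽¹⁾ ∈ 𝔬^{e(m,n)} and g⁽²⁾ ∈ 𝔬^{f(m,n)}. Then g·M_{m,n}(α^{(j)}) ≡ 0 mod π^{ν_j} holds for all j ∈ {1,…,n} if and only if g⁽¹⁾ ≡ 0 mod π^r and g⁽²⁾·(π^{r−ν_1}·B_{m,n}(α^{(1)}) | ⋯ | π^{r−ν_n}·B_{m,n}(α^{(n)})) ≡ 0 mod π^r, where ( · | · ) denotes horizontal juxtaposition of matrices. -/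
open scoped BigOperators

/-- `e(m,n) = binom(n+m-2, n-1)`. -/
def eN (m n : ℕ) : ℕ := (n + m - 2).choose (n - 1)

/-- `f(m,n) = binom(n+m-1, n-1)`. -/
def fN (m n : ℕ) : ℕ := (n + m - 1).choose (n - 1)

/-- `d(m,n) = e(m,n) + f(m,n)`. -/
def dN (m n : ℕ) : ℕ := eN m n + fN m n

/-- Entries of the recursively defined block matrix `B_{m,n}(y)`.
`Bent n m y r c` is the `(r,c)` entry (indices `0`-based) of `B_{m,n}(y 0, …, y (n-1))`.
For `n = 1`, `B_{m,1}(Y₁)` is the `1×1` matrix `(Y₁)`.  For `n ≥ 2`, `B_{m,n}` has row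
blocks `i = 1,…,m+1` of heights `e(i,n-1)` (so block `i` starts at row `e(i-1,n)`,
using `∑_{i'<i} e(i',n-1) = e(i-1,n)`), column blocks `j = 1,…,m` of widths `e(j,n-1)`
(block `j` starting at column `e(j-1,n)`); the diagonal blocks `(j,j)` are
`Y₁·Id_{e(j,n-1)}`, the subdiagonal blocks `(j+1,j)` are `B_{j,n-1}(Y₂,…,Yₙ)`, and all
other blocks vanish. -/
def Bent {R : Type*} [CommRing R] : ℕ → ℕ → (ℕ → R) → ℕ → ℕ → R
  | 0, _, _, _, _ => 0
  | 1, _, y, r, c => if r = 0 ∧ c = 0 then y 0 else 0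
  | n + 2, m, y, r, c =>
      -- `i`, `j` are the (1-based) indices of the row resp. column block containing
      -- row `r` resp. column `c`.
      let i := ((Finset.range (m + 2)).filter fun k => eN k (n + 2) ≤ r).card
      let j := ((Finset.range (m + 1)).filter fun k => eN k (n + 2) ≤ c).card
      if i = j then
        (if r - eN (i - 1) (n + 2) = c - eN (j - 1) (n + 2) then y 0 else 0)
      else if i = j + 1 then
        Bent (n + 1) j (fun k => y (k + 1)) (r - eN j (n + 2)) (c - eN (j - 1) (n + 2))
      else 0

/-- Extend `y : Fin n → R` to `ℕ → R` by zero. -/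
def pad {R : Type*} [Zero R] {n : ℕ} (y : Fin n → R) : ℕ → R :=
  fun k => if h : k < n then y ⟨k, h⟩ else 0

/-- The `f(m,n) × e(m,n)` matrix `B_{m,n}(y)` over `R`. -/
def Bmat {R : Type*} [CommRing R] (m n : ℕ) (y : Fin n → R) :
    Matrix (Fin (fN m n)) (Fin (eN m n)) R :=
  Matrix.of fun r c => Bent n m (pad y) (r : ℕ) (c : ℕ)

/-- The `d(m,n) × d(m,n)` commutator matrix
`M_{m,n}(y) = [[0, -B_{m,n}(y)ᵀ], [B_{m,n}(y), 0]]`, the diagonal zero blocks having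
sizes `e(m,n)` and `f(m,n)`. -/
def Mmat {R : Type*} [CommRing R] (m n : ℕ) (y : Fin n → R) :
    Matrix (Fin (dN m n)) (Fin (dN m n)) R :=
  Matrix.of fun i j =>
    if (i : ℕ) < eN m n ∧ eN m n ≤ (j : ℕ) then
      -(Bent n m (pad y) ((j : ℕ) - eN m n) (i : ℕ))
    else if eN m n ≤ (i : ℕ) ∧ (j : ℕ) < eN m n then
      Bent n m (pad y) ((i : ℕ) - eN m n) ((j : ℕ))
    else 0

/-!
Write `g = (g₁, g₂)` and `B_j = B_{m,n}(α^{(j)})`. The column-`j` condition says that `π^{ν_j}`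
divides both `g₂ B_j` and `B_j g₁`, and `π^r ∣ π^{r-ν_j} x ↔ π^{ν_j} ∣ x` matches the first with
the second condition on the right. The heart of the matter is that `B_{m,n}(y)` is injective modulo `π` as soon as some
`yᵢ` is not divisible by `π`. If `π ∤ y₁`, the matrix is lower triangular with diagonal `y₁` on its
first `e(m,n)` rows. If `π ∣ y₁`, the rows of block `j+1` reduce modulo `π` to
`B_{j,n-1}(y₂,…,yₙ)` applied to the `j`-th block of the vector, and induction on `n` applies.
Since `π ≠ 0` in a domain, injectivity modulo `π` lifts to `π^t`. The last column of the invertible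
matrix `α` is not divisible by `π` and `ν_n = r`, so `π^r ∣ g₁`; conversely `π^r ∣ g₁` gives every
`B_j g₁ ≡ 0 mod π^{ν_j}`.
-/

open Matrix

lemma Prime.dvd_of_lowerTriangular {R : Type*} [CommRing R] {p : R} (hp : Prime p) {N : ℕ}
    {A : ℕ → ℕ → R} {v : ℕ → R} (hA : ∀ r c, r < c → c < N → A r c = 0)
    (hdiag : ∀ r < N, ¬ p ∣ A r r) (h : ∀ r < N, p ∣ ∑ c ∈ Finset.range N, A r c * v c) :
    ∀ c < N, p ∣ v c := by
  intro c
  induction c using Nat.strong_induction_on with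
  | _ c ih =>
    intro hc
    have hrest : p ∣ ∑ c' ∈ (Finset.range N).erase c, A c c' * v c' := by
      refine Finset.dvd_sum fun c' hc' => ?_
      obtain ⟨hne, hc'N⟩ := Finset.mem_erase.mp hc'
      rw [Finset.mem_range] at hc'N
      rcases lt_or_gt_of_ne hne with hlt | hgt
      · exact (ih c' hlt (by omega)).mul_left _
      · rw [hA c c' hgt hc'N, zero_mul]
        exact dvd_zero p
    have hdiag' : p ∣ A c c * v c := by
      have := dvd_sub (h c hc) hrest
      rwa [← Finset.add_sum_erase _ _ (Finset.mem_range.mpr hc), add_sub_cancel_right] at this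
    exact (hp.dvd_or_dvd hdiag').resolve_left (hdiag c hc)

theorem Matrix.pow_dvd_of_dvd_mulVec {R ι κ : Type*} [CommRing R] [IsDomain R] [Fintype κ]
    {p : R} (hp : p ≠ 0) {A : Matrix ι κ R}
    (hA : ∀ w : κ → R, (∀ i, p ∣ (A *ᵥ w) i) → ∀ j, p ∣ w j) (t : ℕ) :
    ∀ v : κ → R, (∀ i, p ^ t ∣ (A *ᵥ v) i) → ∀ j, p ^ t ∣ v j := by
  induction t with
  | zero => simp
  | succ t ih =>
    intro v hv
    have hvt := ih v fun i => (pow_dvd_pow p t.le_succ).trans (hv i)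
    choose w hw using hvt
    have hv_eq : v = p ^ t • w := funext hw
    have hAw : ∀ i, p ∣ (A *ᵥ w) i := fun i => by
      have := hv i
      rwa [hv_eq, mulVec_smul, Pi.smul_apply, smul_eq_mul, pow_succ,
        mul_dvd_mul_iff_left (pow_ne_zero t hp)] at this
    intro j
    rw [hw j, pow_succ]
    exact mul_dvd_mul_left _ (hA w hAw j)

theorem Matrix.exists_not_dvd_of_isUnit_det {R n : Type*} [CommRing R] [Fintype n]
    [DecidableEq n] {A : Matrix n n R} (hA : IsUnit A.det) {p : R} (hp : ¬ IsUnit p) (j : n) :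
    ∃ i, ¬ p ∣ A i j := by
  by_contra! h
  have hone : (A⁻¹ * A) j j = 1 := by rw [Matrix.nonsing_inv_mul A hA, Matrix.one_apply_eq]
  rw [Matrix.mul_apply] at hone
  exact hp (isUnit_of_dvd_one (hone ▸ Finset.dvd_sum fun k _ => (h k).mul_left _))

lemma dvd_mulVec_of_forall_dvd {R ι κ : Type*} [CommRing R] [Fintype κ] {d : R}
    (A : Matrix ι κ R) {v : κ → R} (hv : ∀ j, d ∣ v j) (i : ι) : d ∣ (A *ᵥ v) i :=
  Finset.dvd_sum fun j _ => (hv j).mul_left _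

lemma pow_dvd_pow_sub_mul_iff {R : Type*} [CommRing R] [IsDomain R] {p : R} (hp : p ≠ 0)
    {a b : ℕ} (hba : b ≤ a) (x : R) : p ^ a ∣ p ^ (a - b) * x ↔ p ^ b ∣ x := by
  conv_rhs => rw [← mul_dvd_mul_iff_left (pow_ne_zero (a - b) hp), ← pow_add, Nat.sub_add_cancel hba]

lemma vecMul_of_mul_blocks_apply {R ι κ μ : Type*} [CommRing R] [Fintype ι] (v : ι → R)
    (s : κ → R) (B : κ → Matrix ι μ R) (j : κ) (c : μ) :
    (v ᵥ* of fun i (jc : κ × μ) => s jc.1 * B jc.1 i jc.2) (j, c) = s j * (v ᵥ* B j) c := by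
  simp only [vecMul, dotProduct, of_apply, Finset.mul_sum, mul_left_comm]

lemma eN_mono_left {k l : ℕ} (n : ℕ) (h : k ≤ l) : eN k n ≤ eN l n :=
  Nat.choose_le_choose _ (by omega)

lemma fN_eq_eN_succ (m n : ℕ) : fN m n = eN (m + 1) n := rfl

lemma eN_zero_left (n : ℕ) : eN 0 (n + 2) = 0 :=
  Nat.choose_eq_zero_of_lt (by omega)

lemma eN_one_right (m : ℕ) : eN m 1 = 1 := by
  simp [eN]

lemma eN_succ_left (k n : ℕ) : eN (k + 1) (n + 2) = eN k (n + 2) + eN (k + 1) (n + 1) := by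
  unfold eN
  rw [show n + 2 + (k + 1) - 2 = n + k + 1 by omega, show n + 2 - 1 = n + 1 by omega,
    Nat.choose_succ_succ', add_comm]
  congr 2 <;> omega

lemma exists_eN_add_eq {m n r : ℕ} (hr : r < eN m (n + 2)) :
    ∃ k < m, ∃ s < eN (k + 1) (n + 1), eN k (n + 2) + s = r := by
  induction m with
  | zero => simp [eN_zero_left] at hr
  | succ m ih =>
    by_cases h : r < eN m (n + 2)
    · obtain ⟨k, hk, s, hs, rfl⟩ := ih h
      exact ⟨k, by omega, s, hs, rfl⟩
    · rw [eN_succ_left] at hr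
      exact ⟨m, by omega, r - eN m (n + 2), by omega, by omega⟩

lemma card_filter_eN_le {N k s n : ℕ} (hk : k < N) (hs : s < eN (k + 1) (n + 2) - eN k (n + 2)) :
    ((Finset.range N).filter fun l => eN l (n + 2) ≤ eN k (n + 2) + s).card = k + 1 := by
  rw [← Finset.card_range (k + 1)]
  congr 1
  ext l
  simp only [Finset.mem_filter, Finset.mem_range]
  constructor
  · rintro ⟨-, hl⟩
    by_contra! hkl
    have := eN_mono_left (n + 2) (show k + 1 ≤ l by omega)
    omega
  · intro hl
    exact ⟨by omega, (eN_mono_left (n + 2) (show l ≤ k by omega)).trans (by omega)⟩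

lemma Bent_eN_add_eN_add {R : Type*} [CommRing R] {m n k l s t : ℕ} (y : ℕ → R)
    (hk : k ≤ m) (hs : s < eN (k + 1) (n + 1)) (hl : l < m) (ht : t < eN (l + 1) (n + 1)) :
    Bent (n + 2) m y (eN k (n + 2) + s) (eN l (n + 2) + t) =
      if k = l then (if s = t then y 0 else 0)
      else if k = l + 1 then Bent (n + 1) (l + 1) (fun i => y (i + 1)) s t else 0 := by
  simp only [Bent]
  rw [card_filter_eN_le (by omega) (by rw [eN_succ_left]; omega),
    card_filter_eN_le (by omega) (by rw [eN_succ_left]; omega)]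
  simp only [Nat.add_sub_cancel, Nat.add_right_cancel_iff, Nat.add_sub_cancel_left]
  split_ifs with _ _ hkl
  · rfl
  · rfl
  · subst hkl; rw [Nat.add_sub_cancel_left]
  · rfl

lemma Bent_eq_zero_of_lt {R : Type*} [CommRing R] {m n r c : ℕ} (y : ℕ → R) (hrc : r < c)
    (hc : c < eN m (n + 1)) : Bent (n + 1) m y r c = 0 := by
  rcases n with _ | n
  · rw [eN_one_right] at hc; omega
  rw [show n + 1 + 1 = n + 2 from rfl] at hc ⊢
  obtain ⟨k, hk, s, hs, rfl⟩ := exists_eN_add_eq (hrc.trans hc)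
  obtain ⟨l, hl, t, ht, rfl⟩ := exists_eN_add_eq hc
  rw [Bent_eN_add_eN_add y hk.le hs hl ht]
  have hkl : k ≠ l + 1 := by
    rintro rfl
    rw [eN_succ_left] at hrc
    omega
  split_ifs with hkl_eq hst
  · subst hkl_eq hst; omega
  all_goals rfl

lemma Bent_self {R : Type*} [CommRing R] {m n r : ℕ} (y : ℕ → R) (hr : r < eN m (n + 1)) :
    Bent (n + 1) m y r r = y 0 := by
  rcases n with _ | n
  · rw [eN_one_right, Nat.lt_one_iff] at hr
    simp [Bent, hr]
  obtain ⟨k, hk, s, hs, rfl⟩ := exists_eN_add_eq hr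
  simp [Bent_eN_add_eN_add y hk.le hs hk hs]

lemma dvd_sum_Bent_sub_sum_Bent {R : Type*} [CommRing R] {m n k s : ℕ} (y v : ℕ → R)
    (hk : k < m) (hs : s < eN (k + 2) (n + 1)) :
    y 0 ∣ ∑ c ∈ Finset.range (eN m (n + 2)), Bent (n + 2) m y (eN (k + 1) (n + 2) + s) c * v c -
      ∑ t ∈ Finset.range (eN (k + 1) (n + 1)),
        Bent (n + 1) (k + 1) (fun i => y (i + 1)) s t * v (eN k (n + 2) + t) := by
  have hblock : (Finset.range (eN m (n + 2))).filter
      (fun c => c ∈ Finset.Ico (eN k (n + 2)) (eN (k + 1) (n + 2))) =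
        Finset.Ico (eN k (n + 2)) (eN (k + 1) (n + 2)) := by
    have := eN_mono_left (n + 2) (show k + 1 ≤ m from hk)
    ext c
    simp only [Finset.mem_filter, Finset.mem_range, Finset.mem_Ico]
    omega
  have hin : ∑ c ∈ Finset.Ico (eN k (n + 2)) (eN (k + 1) (n + 2)),
        Bent (n + 2) m y (eN (k + 1) (n + 2) + s) c * v c =
      ∑ t ∈ Finset.range (eN (k + 1) (n + 1)),
        Bent (n + 1) (k + 1) (fun i => y (i + 1)) s t * v (eN k (n + 2) + t) := by
    rw [Finset.sum_Ico_eq_sum_range, show eN (k + 1) (n + 2) - eN k (n + 2) = eN (k + 1) (n + 1) by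
      rw [eN_succ_left, Nat.add_sub_cancel_left]]
    refine Finset.sum_congr rfl fun t ht => ?_
    rw [Bent_eN_add_eN_add y hk hs hk (Finset.mem_range.mp ht)]
    simp
  rw [← Finset.sum_filter_add_sum_filter_not _
    (fun c => c ∈ Finset.Ico (eN k (n + 2)) (eN (k + 1) (n + 2))), hblock, hin, add_sub_cancel_left]
  refine Finset.dvd_sum fun c hc => ?_
  simp only [Finset.mem_filter, Finset.mem_range, Finset.mem_Ico] at hc
  obtain ⟨l, hl, t, ht, rfl⟩ := exists_eN_add_eq hc.1
  have hlk : l ≠ k := by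
    rintro rfl
    rw [eN_succ_left] at hc
    omega
  rw [Bent_eN_add_eN_add y hk hs hl ht, if_neg (by omega : k + 1 ≠ l + 1)]
  split_ifs <;> simp

theorem Prime.dvd_of_dvd_sum_Bent_mul {R : Type*} [CommRing R] {p : R} (hp : Prime p) (n : ℕ) :
    ∀ (m : ℕ) (y v : ℕ → R), (∃ i < n, ¬ p ∣ y i) →
      (∀ r < fN m n, p ∣ ∑ c ∈ Finset.range (eN m n), Bent n m y r c * v c) →
      ∀ c < eN m n, p ∣ v c := by
  induction n with
  | zero => rintro m y v ⟨i, hi, -⟩; omega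
  | succ n ih =>
    intro m y v hy h
    by_cases hy0 : p ∣ y 0
    · obtain ⟨i, hi, hyi⟩ := hy
      have hi0 : i ≠ 0 := by rintro rfl; exact hyi hy0
      obtain ⟨n, rfl⟩ : ∃ n', n = n' + 1 := ⟨n - 1, by omega⟩
      rw [show n + 1 + 1 = n + 2 from rfl] at h ⊢
      intro c hc
      obtain ⟨k, hk, t, ht, rfl⟩ := exists_eN_add_eq hc
      refine ih (k + 1) (fun i => y (i + 1)) (fun t => v (eN k (n + 2) + t))
        ⟨i - 1, by omega, by rwa [Nat.sub_add_cancel (by omega)]⟩ (fun s hs => ?_) t ht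
      have hrow := h (eN (k + 1) (n + 2) + s) (by
        have := eN_mono_left (n + 2) (show k + 2 ≤ m + 1 by omega)
        rw [fN_eq_eN_succ, eN_succ_left (k + 1)] at *
        omega)
      simpa using dvd_sub hrow (hy0.trans (dvd_sum_Bent_sub_sum_Bent y v hk hs))
    · exact hp.dvd_of_lowerTriangular (fun r c hrc hc => Bent_eq_zero_of_lt y hrc hc)
        (fun r hr => Bent_self y hr ▸ hy0)
        (fun r hr => h r (hr.trans_le (eN_mono_left _ m.le_succ)))

lemma pad_coe {R : Type*} [Zero R] {n : ℕ} (y : Fin n → R) (i : Fin n) : pad y i = y i :=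
  dif_pos i.isLt

lemma Bmat_mulVec_apply {R : Type*} [CommRing R] {m n : ℕ} (y : Fin n → R)
    (v : Fin (eN m n) → R) (r : Fin (fN m n)) :
    (Bmat m n y *ᵥ v) r = ∑ c ∈ Finset.range (eN m n), Bent n m (pad y) r c * pad v c := by
  rw [← Fin.sum_univ_eq_sum_range]
  simp [mulVec, dotProduct, Bmat, pad_coe]

theorem Prime.dvd_of_dvd_Bmat_mulVec {R : Type*} [CommRing R] {p : R} (hp : Prime p) {m n : ℕ}
    {y : Fin n → R} (hy : ∃ i, ¬ p ∣ y i) {v : Fin (eN m n) → R}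
    (h : ∀ r, p ∣ (Bmat m n y *ᵥ v) r) (c : Fin (eN m n)) : p ∣ v c := by
  obtain ⟨i, hi⟩ := hy
  rw [← pad_coe v]
  refine hp.dvd_of_dvd_sum_Bent_mul n m (pad y) (pad v) ⟨i, i.isLt, by rwa [pad_coe]⟩
    (fun r hr => ?_) c c.isLt
  simpa [Bmat_mulVec_apply] using h ⟨r, hr⟩

theorem Prime.pow_dvd_of_pow_dvd_Bmat_mulVec {R : Type*} [CommRing R] [IsDomain R] {p : R}
    (hp : Prime p) {m n : ℕ} {y : Fin n → R} (hy : ∃ i, ¬ p ∣ y i) (t : ℕ)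
    {v : Fin (eN m n) → R} (h : ∀ r, p ^ t ∣ (Bmat m n y *ᵥ v) r) (c : Fin (eN m n)) :
    p ^ t ∣ v c :=
  pow_dvd_of_dvd_mulVec hp.ne_zero (fun _ hw => hp.dvd_of_dvd_Bmat_mulVec hy hw) t v h c

lemma Mmat_apply {R : Type*} [CommRing R] {m n : ℕ} (y : Fin n → R) (i j : Fin (eN m n + fN m n)) :
    Mmat m n y i j = if (i : ℕ) < eN m n ∧ eN m n ≤ (j : ℕ) then
      -(Bent n m (pad y) ((j : ℕ) - eN m n) (i : ℕ))
    else if eN m n ≤ (i : ℕ) ∧ (j : ℕ) < eN m n then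
      Bent n m (pad y) ((i : ℕ) - eN m n) ((j : ℕ))
    else 0 := rfl

lemma vecMul_Mmat_castAdd {R : Type*} [CommRing R] {m n : ℕ} (y : Fin n → R)
    (g : Fin (dN m n) → R) (c : Fin (eN m n)) :
    (g ᵥ* Mmat m n y) (Fin.castAdd (fN m n) c) =
      ((fun i => g (Fin.natAdd (eN m n) i)) ᵥ* Bmat m n y) c := by
  change ∑ i : Fin (eN m n + fN m n), g i * Mmat m n y i _ = _
  have hlt : ∀ x : Fin (eN m n), ¬ eN m n ≤ x := fun x => not_le.mpr x.isLt
  simp [Fin.sum_univ_add, Mmat_apply, Bmat, vecMul, dotProduct, hlt]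

lemma vecMul_Mmat_natAdd {R : Type*} [CommRing R] {m n : ℕ} (y : Fin n → R)
    (g : Fin (dN m n) → R) (c : Fin (fN m n)) :
    (g ᵥ* Mmat m n y) (Fin.natAdd (eN m n) c) =
      -(Bmat m n y *ᵥ fun i => g (Fin.castAdd (fN m n) i)) c := by
  change ∑ i : Fin (eN m n + fN m n), g i * Mmat m n y i _ = _
  simp [Fin.sum_univ_add, Mmat_apply, Bmat, mulVec, dotProduct, mul_comm]

lemma dvd_vecMul_Mmat_iff {R : Type*} [CommRing R] {m n : ℕ} (y : Fin n → R)
    (g : Fin (dN m n) → R) (d : R) :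
    (∀ c, d ∣ (g ᵥ* Mmat m n y) c) ↔
      (∀ c, d ∣ ((fun i => g (Fin.natAdd (eN m n) i)) ᵥ* Bmat m n y) c) ∧
        ∀ c, d ∣ (Bmat m n y *ᵥ fun i => g (Fin.castAdd (fN m n) i)) c := by
  refine (Fin.forall_fin_add _).trans ?_
  simp only [vecMul_Mmat_castAdd, vecMul_Mmat_natAdd, dvd_neg]

theorem stmt7 (m n : ℕ) (hn : 1 ≤ n)
    (𝔬 : Type*) [CommRing 𝔬] [IsDomain 𝔬] [IsDiscreteValuationRing 𝔬]
    (π : 𝔬) (hπ : Irreducible π)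
    (I : Finset ℕ) (hI : I ⊆ Finset.Icc 1 (n - 1))
    (rι : ℕ → ℕ)
    (r : ℕ) (hr : r = ∑ ι ∈ I, rι ι)
    (ν : ℕ → ℕ) (hν : ∀ k, ν k = ∑ ι ∈ I.filter (fun ι => ι ≤ k - 1), rι ι)
    (α : Matrix (Fin n) (Fin n) 𝔬) (hα : IsUnit α.det)
    (g : Fin (dN m n) → 𝔬) :
    (∀ j : Fin n, ∀ c : Fin (dN m n),
        π ^ ν ((j : ℕ) + 1) ∣ Matrix.vecMul g (Mmat m n fun i => α i j) c) ↔
      ((∀ c : Fin (dN m n), (c : ℕ) < eN m n → π ^ r ∣ g c) ∧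
       (∀ c : Fin n × Fin (eN m n),
          π ^ r ∣ Matrix.vecMul
            (fun i : Fin (fN m n) => g ⟨eN m n + (i : ℕ), by have := i.isLt; simp only [dN]; omega⟩)
            (Matrix.of fun (rr : Fin (fN m n)) (jc : Fin n × Fin (eN m n)) =>
              π ^ (r - ν ((jc.1 : ℕ) + 1)) * Bmat m n (fun i => α i jc.1) rr jc.2) c)) := by
  have hν_le (k : ℕ) : ν k ≤ r := by
    rw [hν, hr]
    exact Finset.sum_le_sum_of_subset (Finset.filter_subset _ _)
  have hν_last : ν n = r := by
    rw [hν, hr, Finset.filter_true_of_mem fun ι hι => by have := Finset.mem_Icc.mp (hI hι); omega]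
  simp only [dvd_vecMul_Mmat_iff, forall_and, Prod.forall, vecMul_of_mul_blocks_apply
    (s := fun j : Fin n => π ^ (r - ν (j + 1))) (B := fun j => Bmat m n fun i => α i j),
    pow_dvd_pow_sub_mul_iff hπ.ne_zero (hν_le _)]
  constructor
  · rintro ⟨hBv, hgB⟩
    refine ⟨fun c hc => ?_, hBv⟩
    have hcol := α.exists_not_dvd_of_isUnit_det hα hπ.not_isUnit ⟨n - 1, by omega⟩
    refine hπ.prime.pow_dvd_of_pow_dvd_Bmat_mulVec hcol r
      (v := fun i => g (Fin.castAdd (fN m n) i)) (fun c => ?_) ⟨c, hc⟩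
    simpa [Nat.sub_add_cancel hn, hν_last] using hgB ⟨n - 1, by omega⟩ c
  · rintro ⟨hg, hBv⟩
    refine ⟨hBv, fun j => dvd_mulVec_of_forall_dvd _ fun c => ?_⟩
    exact (pow_dvd_pow π (hν_le _)).trans (hg _ c.isLt)
end

section
/- For all integers n ≥ 1 and d ≥ 1, the following identity holds in the field ℚ(X) of rational functions: [∑_{w∈Sₙ} X^{−ℓ(w)} ∏_{j∈Des(w)} X^{j(n−j+d)}] / ∏_{i=0}^{n−1}(1 − X^{(n−i)(i+d)}) = 1 / ∏_{i=0}^{n−1}(1 − X^{d+i}). -/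
/-!
Write the summand of `w` as `X ^ W(w)`. Lowering all values of `u ∈ S_{n+1}` by one, cyclically,
multiplies `X ^ W(u)` by `X ^ d` as long as the value `0` is not in the last position: inversions
and descents only change next to the position of `0`. Every `u ∈ S_{n+1}` is, uniquely, such a
shift by `k ≤ n` of a permutation fixing the last point, which restricts to some `w ∈ S_n` whose
weight is taken with `d + 1` instead of `d`; hence
`∑_{S_{n+1}} X ^ W_{n+1,d} = (1 + X^d + ⋯ + X^{nd}) ∑_{S_n} X ^ W_{n,d+1}`,
and the geometric sum `(1 - X^{(n+1)d}) / (1 - X^d)` turns this into the identity by induction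
on `n`.
-/

open scoped BigOperators

/-- The values of `w ∈ Sₙ` as a function on `{0,…,n-1}` (0-based), extended by the
identity outside this range. -/
def permVal {n : ℕ} (w : Equiv.Perm (Fin n)) (t : ℕ) : ℕ :=
  if h : t < n then (w ⟨t, h⟩ : ℕ) else t

/-- `ℓ(w)`, the number of inversions (Coxeter length) of `w ∈ Sₙ`. -/
def lenP {n : ℕ} (w : Equiv.Perm (Fin n)) : ℕ :=
  ((Finset.range n ×ˢ Finset.range n).filter fun p =>
    p.1 < p.2 ∧ permVal w p.2 < permVal w p.1).card

/-- `Des(w) = {i ∈ {1,…,n-1} : w(i+1) < w(i)}`, the descent set of `w ∈ Sₙ`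
(in 1-based positions). -/
def desP {n : ℕ} (w : Equiv.Perm (Fin n)) : Finset ℕ :=
  (Finset.Icc 1 (n - 1)).filter fun j => permVal w j < permVal w (j - 1)

open Finset

lemma Equiv.subRight_add {G : Type*} [AddCommGroup G] (a b : G) :
    Equiv.subRight (a + b) = Equiv.subRight b * Equiv.subRight a :=
  Equiv.ext fun x => (sub_sub x a b).symm

open Polynomial in
lemma RatFunc.one_sub_X_pow_ne_zero {K : Type*} [Field K] {e : ℕ} (he : e ≠ 0) :
    (1 : RatFunc K) - RatFunc.X ^ e ≠ 0 := by
  rw [sub_ne_zero, ne_comm, ← RatFunc.algebraMap_X, ← map_pow,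
    ← map_one (algebraMap K[X] (RatFunc K)), (IsFractionRing.injective K[X] (RatFunc K)).ne_iff]
  exact fun h => he (by simpa using congrArg natDegree h)

section PermVal

variable {n : ℕ}

lemma permVal_of_lt (w : Equiv.Perm (Fin n)) {t : ℕ} (h : t < n) :
    permVal w t = w ⟨t, h⟩ := dif_pos h

lemma permVal_of_le (w : Equiv.Perm (Fin n)) {t : ℕ} (h : n ≤ t) : permVal w t = t :=
  dif_neg (Nat.not_lt.mpr h)

lemma permVal_lt (w : Equiv.Perm (Fin n)) {t : ℕ} (h : t < n) : permVal w t < n := by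
  rw [permVal_of_lt w h]; exact (w _).is_lt

lemma permVal_injOn (w : Equiv.Perm (Fin n)) : Set.InjOn (permVal w) (Set.Iio n) := by
  intro t ht s hs h
  rw [permVal_of_lt w ht, permVal_of_lt w hs, ← Fin.ext_iff] at h
  exact congrArg Fin.val (w.injective h)

lemma permVal_eq_zero_iff (u : Equiv.Perm (Fin (n + 1))) {t : ℕ} (h : t < n + 1) :
    permVal u t = 0 ↔ t = (u⁻¹ 0 : Fin (n + 1)) := by
  rw [permVal_of_lt u h, Fin.val_eq_zero_iff, ← Equiv.Perm.eq_inv_iff_eq, Fin.ext_iff]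

lemma permVal_subRight_one_mul (u : Equiv.Perm (Fin (n + 1))) {t : ℕ} (h : t < n + 1) :
    permVal (Equiv.subRight 1 * u) t = if permVal u t = 0 then n else permVal u t - 1 := by
  rw [permVal_of_lt _ h, permVal_of_lt u h, Equiv.Perm.mul_apply, Equiv.subRight_apply,
    Fin.coe_sub_one]
  simp only [Fin.ext_iff, Fin.val_zero]

lemma mem_desP_iff (w : Equiv.Perm (Fin n)) {j : ℕ} :
    j ∈ desP w ↔ 1 ≤ j ∧ j < n ∧ permVal w j < permVal w (j - 1) := by
  simp only [desP, mem_filter, mem_Icc]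
  omega

end PermVal

lemma card_filter_lt_and_snd_eq {m P : ℕ} (hP : P < m) :
    ((range m ×ˢ range m).filter fun p => p.1 < p.2 ∧ p.2 = P).card = P := by
  have : ((range m ×ˢ range m).filter fun p => p.1 < p.2 ∧ p.2 = P) = range P ×ˢ {P} := by
    ext ⟨a, b⟩
    simp only [mem_filter, mem_product, mem_range, mem_singleton]
    omega
  rw [this, card_product, card_range, card_singleton, mul_one]

lemma card_filter_lt_and_fst_eq {m P : ℕ} (hP : P < m) :
    ((range m ×ˢ range m).filter fun p => p.1 < p.2 ∧ p.1 = P).card = m - P - 1 := by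
  have : ((range m ×ˢ range m).filter fun p => p.1 < p.2 ∧ p.1 = P) = {P} ×ˢ Ioo P m := by
    ext ⟨a, b⟩
    simp only [mem_filter, mem_product, mem_range, mem_singleton, mem_Ioo]
    omega
  rw [this, card_product, card_singleton, Nat.card_Ioo, one_mul]

section CyclicShift

variable {n : ℕ} (u : Equiv.Perm (Fin (n + 1)))

/-- Shifting the values down cyclically turns the value `0`, at position `P`, into the maximum `n`:
the `P` inversions ending at `P` disappear and `n - P` inversions starting at `P` appear. -/
lemma lenP_subRight_one_mul :
    lenP (Equiv.subRight 1 * u) + ((u⁻¹ 0 : Fin (n + 1)) : ℕ)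
      = lenP u + (n - ((u⁻¹ 0 : Fin (n + 1)) : ℕ)) := by
  set P : ℕ := ((u⁻¹ 0 : Fin (n + 1)) : ℕ)
  have hP : P < n + 1 := (u⁻¹ 0).is_lt
  have hsnd := card_filter_lt_and_snd_eq hP
  have hfst := card_filter_lt_and_fst_eq hP
  suffices lenP (Equiv.subRight 1 * u)
      + ((range (n + 1) ×ˢ range (n + 1)).filter fun p => p.1 < p.2 ∧ p.2 = P).card
      = lenP u + ((range (n + 1) ×ˢ range (n + 1)).filter fun p => p.1 < p.2 ∧ p.1 = P).card
    by omega
  simp only [lenP, card_filter, ← sum_add_distrib]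
  refine sum_congr rfl fun p hp => ?_
  obtain ⟨ha, hb⟩ : p.1 < n + 1 ∧ p.2 < n + 1 := by simpa using hp
  rw [permVal_subRight_one_mul u ha, permVal_subRight_one_mul u hb]
  have ha0 := permVal_eq_zero_iff u ha
  have hb0 := permVal_eq_zero_iff u hb
  have hlta := permVal_lt u ha
  have hltb := permVal_lt u hb
  have hinj := permVal_injOn u ha hb
  split_ifs <;> omega

lemma desP_subRight_one_mul (hu : u (Fin.last n) ≠ 0) :
    desP (Equiv.subRight 1 * u)
      = insert (((u⁻¹ 0 : Fin (n + 1)) : ℕ) + 1) ((desP u).erase ((u⁻¹ 0 : Fin (n + 1)) : ℕ)) := by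
  have hP : ((u⁻¹ 0 : Fin (n + 1)) : ℕ) < n :=
    Fin.val_lt_last fun h => hu (by rw [← h]; simp)
  ext j
  simp only [mem_insert, mem_erase, mem_desP_iff]
  by_cases hj : 1 ≤ j ∧ j < n + 1
  · have hj' : j - 1 < n + 1 := by omega
    rw [permVal_subRight_one_mul u hj.2, permVal_subRight_one_mul u hj']
    have h0 := permVal_eq_zero_iff u hj.2
    have h0' := permVal_eq_zero_iff u hj'
    have hlt := permVal_lt u hj.2
    have hlt' := permVal_lt u hj'
    have hinj := permVal_injOn u hj.2 hj'
    split_ifs <;> omega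
  · omega

lemma sum_desP_subRight_one_mul {M : Type*} [AddCommGroup M] (g : ℕ → M) (hg : g 0 = 0)
    (hu : u (Fin.last n) ≠ 0) :
    ∑ j ∈ desP (Equiv.subRight 1 * u), g j
      = ∑ j ∈ desP u, g j + g (((u⁻¹ 0 : Fin (n + 1)) : ℕ) + 1)
        - g ((u⁻¹ 0 : Fin (n + 1)) : ℕ) := by
  set P : ℕ := ((u⁻¹ 0 : Fin (n + 1)) : ℕ)
  have hzero : permVal u P = 0 := (permVal_eq_zero_iff u (by omega)).2 rfl
  have hsucc : P + 1 ∉ desP u := by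
    rw [mem_desP_iff, Nat.add_sub_cancel, hzero]
    omega
  rw [desP_subRight_one_mul u hu, sum_insert fun h => hsucc (mem_of_mem_erase h)]
  by_cases hmem : P ∈ desP u
  · rw [sum_erase_eq_sub hmem]
    abel
  · have hP0 : P = 0 := by
      by_contra hP0
      have hne := (permVal_injOn u).ne (show P - 1 < n + 1 by omega) (show P < n + 1 by omega)
        (by omega)
      exact hmem ((mem_desP_iff u).2 ⟨by omega, by omega, by omega⟩)
    rw [erase_eq_of_notMem hmem, hP0, hg]
    abel

end CyclicShift

section Extension

variable {n : ℕ} (w : Equiv.Perm (Fin n))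

lemma permVal_viaEmbedding_castSuccEmb : permVal (w.viaEmbedding Fin.castSuccEmb) = permVal w := by
  funext t
  rcases lt_or_ge t n with ht | ht
  · rw [permVal_of_lt _ (Nat.lt_succ_of_lt ht), permVal_of_lt w ht]
    exact congrArg Fin.val (w.viaEmbedding_apply Fin.castSuccEmb ⟨t, ht⟩)
  · rw [permVal_of_le w ht]
    rcases ht.eq_or_lt with h | ht
    · subst h
      rw [permVal_of_lt _ (Nat.lt_succ_self n)]
      exact congrArg Fin.val (w.viaEmbedding_apply_of_notMem _ (Fin.last n) (by simp))
    · exact permVal_of_le _ ht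

lemma lenP_viaEmbedding_castSuccEmb : lenP (w.viaEmbedding Fin.castSuccEmb) = lenP w := by
  simp only [lenP, permVal_viaEmbedding_castSuccEmb]
  congr 1
  ext ⟨a, b⟩
  simp only [mem_filter, mem_product, mem_range]
  refine ⟨fun ⟨⟨ha, hb⟩, hab, hinv⟩ => ⟨⟨?_, ?_⟩, hab, hinv⟩,
    fun ⟨⟨ha, hb⟩, hab, hinv⟩ => ⟨⟨by omega, by omega⟩, hab, hinv⟩⟩ <;>
  · by_contra h
    rw [permVal_of_le w (by omega : n ≤ b)] at hinv
    have := permVal_lt w (by omega : a < n)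
    omega

lemma desP_viaEmbedding_castSuccEmb : desP (w.viaEmbedding Fin.castSuccEmb) = desP w := by
  ext j
  rw [mem_desP_iff, mem_desP_iff, permVal_viaEmbedding_castSuccEmb]
  refine ⟨fun ⟨hj, hjn, hdes⟩ => ⟨hj, ?_, hdes⟩, fun ⟨hj, hjn, hdes⟩ => ⟨hj, by omega, hdes⟩⟩
  by_contra h
  rw [permVal_of_le w (by omega : n ≤ j)] at hdes
  have := permVal_lt w (by omega : j - 1 < n)
  omega

end Extension

def igusaWeight (n d : ℕ) (w : Equiv.Perm (Fin n)) : ℤ :=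
  ∑ j ∈ desP w, (j : ℤ) * (n - j + d) - lenP w

lemma inv_pow_lenP_mul_prod_pow_eq_zpow {G₀ : Type*} [CommGroupWithZero G₀] {x : G₀} (hx : x ≠ 0)
    {n : ℕ} (d : ℕ) (w : Equiv.Perm (Fin n)) :
    (x ^ lenP w)⁻¹ * ∏ j ∈ desP w, x ^ (j * (n - j + d)) = x ^ igusaWeight n d w := by
  have hsum : ∑ j ∈ desP w, (j : ℤ) * (n - j + d) = ((∑ j ∈ desP w, j * (n - j + d) : ℕ) : ℤ) := by
    push_cast
    refine sum_congr rfl fun j hj => ?_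
    rw [Nat.cast_sub ((mem_desP_iff w).1 hj).2.1.le]
  rw [igusaWeight, hsum, zpow_sub₀ hx, zpow_natCast, zpow_natCast, prod_pow_eq_pow_sum,
    div_eq_inv_mul]

lemma igusaWeight_viaEmbedding_castSuccEmb {n : ℕ} (d : ℕ) (w : Equiv.Perm (Fin n)) :
    igusaWeight (n + 1) d (w.viaEmbedding Fin.castSuccEmb) = igusaWeight n (d + 1) w := by
  rw [igusaWeight, igusaWeight, lenP_viaEmbedding_castSuccEmb, desP_viaEmbedding_castSuccEmb]
  push_cast
  congr 1
  exact sum_congr rfl fun j _ => by ring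

lemma igusaWeight_subRight_one_mul {n : ℕ} (u : Equiv.Perm (Fin (n + 1))) (d : ℕ)
    (hu : u (Fin.last n) ≠ 0) :
    igusaWeight (n + 1) d (Equiv.subRight 1 * u) = igusaWeight (n + 1) d u + d := by
  have hlen := lenP_subRight_one_mul u
  have hP : ((u⁻¹ 0 : Fin (n + 1)) : ℕ) ≤ n := Fin.is_le _
  zify [hP] at hlen
  rw [igusaWeight, igusaWeight, sum_desP_subRight_one_mul u _ (by simp) hu]
  push_cast
  linear_combination (-1 : ℤ) * hlen

lemma igusaWeight_subRight_mul_viaEmbedding {n : ℕ} (d : ℕ) (w : Equiv.Perm (Fin n))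
    (k : Fin (n + 1)) :
    igusaWeight (n + 1) d (Equiv.subRight k * w.viaEmbedding Fin.castSuccEmb)
      = igusaWeight n (d + 1) w + ((k * d : ℕ) : ℤ) := by
  induction k using Fin.induction with
  | zero =>
    rw [show Equiv.subRight (0 : Fin (n + 1)) = 1 from Equiv.ext sub_zero, one_mul,
      igusaWeight_viaEmbedding_castSuccEmb]
    simp
  | succ i ih =>
    have hu : (Equiv.subRight i.castSucc * w.viaEmbedding Fin.castSuccEmb) (Fin.last n) ≠ 0 := by
      rw [Equiv.Perm.mul_apply, w.viaEmbedding_apply_of_notMem _ _ (by simp),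
        Equiv.subRight_apply, sub_ne_zero]
      exact (Fin.castSucc_lt_last i).ne'
    have hshift : Equiv.subRight i.succ = Equiv.subRight 1 * Equiv.subRight i.castSucc := by
      rw [← Fin.coeSucc_eq_succ, Equiv.subRight_add]
    rw [hshift, mul_assoc, igusaWeight_subRight_one_mul _ d hu, ih, Fin.val_succ, Fin.val_castSucc]
    push_cast
    ring

section IgusaSum

variable {K : Type*} [Field K] {x : K}

lemma sum_zpow_igusaWeight_succ (hx : x ≠ 0) (n d : ℕ) :
    ∑ u : Equiv.Perm (Fin (n + 1)), x ^ igusaWeight (n + 1) d u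
      = (∑ k ∈ range (n + 1), (x ^ d) ^ k)
        * ∑ w : Equiv.Perm (Fin n), x ^ igusaWeight n (d + 1) w := by
  let Φ : Equiv.Perm (Fin n) × Fin (n + 1) → Equiv.Perm (Fin (n + 1)) :=
    fun p => Equiv.subRight p.2 * p.1.viaEmbedding Fin.castSuccEmb
  have hlast (p) : Φ p (Fin.last n) = Fin.last n - p.2 := by
    simp [Φ, Equiv.Perm.viaEmbedding_apply_of_notMem]
  have hΦ : Function.Bijective Φ := by
    refine (Fintype.bijective_iff_injective_and_card Φ).2 ⟨fun p q hpq => ?_, ?_⟩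
    · have h2 : p.2 = q.2 := sub_right_inj.1 (by rw [← hlast, ← hlast, hpq])
      have h1 : p.1 = q.1 := Equiv.Perm.viaEmbeddingHom_injective Fin.castSuccEmb
        (by simpa [Φ, h2, Equiv.Perm.viaEmbeddingHom_apply] using hpq)
      exact Prod.ext h1 h2
    · simp [Fintype.card_perm, Nat.factorial_succ, mul_comm]
  rw [← hΦ.sum_comp, Fintype.sum_prod_type, ← Fin.sum_univ_eq_sum_range (fun k => (x ^ d) ^ k),
    sum_mul_sum, sum_comm]
  refine sum_congr rfl fun w _ => sum_congr rfl fun k _ => ?_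
  rw [igusaWeight_subRight_mul_viaEmbedding, zpow_add₀ hx, zpow_natCast, pow_mul', mul_comm]

lemma sum_zpow_igusaWeight_mul_prod (hx : x ≠ 0) (n d : ℕ) :
    (∑ w : Equiv.Perm (Fin n), x ^ igusaWeight n d w) * ∏ i ∈ range n, (1 - x ^ (d + i))
      = ∏ i ∈ range n, (1 - x ^ ((n - i) * (i + d))) := by
  induction n generalizing d with
  | zero => simp [igusaWeight, lenP, desP]
  | succ n ih =>
    have hgeom := geom_sum_mul_neg (x ^ d) (n + 1)
    rw [← pow_mul'] at hgeom
    have hleft : ∏ i ∈ range n, (1 - x ^ (d + (i + 1))) = ∏ i ∈ range n, (1 - x ^ (d + 1 + i)) :=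
      prod_congr rfl fun i _ => by rw [add_comm i 1, add_assoc]
    have hright : ∏ i ∈ range n, (1 - x ^ ((n + 1 - (i + 1)) * (i + 1 + d)))
        = ∏ i ∈ range n, (1 - x ^ ((n - i) * (i + (d + 1)))) :=
      prod_congr rfl fun i _ => by rw [Nat.add_sub_add_right, add_right_comm, add_assoc]
    rw [sum_zpow_igusaWeight_succ hx, prod_range_succ', prod_range_succ', hleft, hright, ← ih]
    simp only [add_zero, Nat.sub_zero, zero_add]
    rw [← hgeom]
    ring

end IgusaSum

theorem stmt13_general (n d : ℕ) (hd : 1 ≤ d) :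
    (∑ w : Equiv.Perm (Fin n),
        ((RatFunc.X : RatFunc ℚ) ^ lenP w)⁻¹ *
          ∏ j ∈ desP w, (RatFunc.X : RatFunc ℚ) ^ (j * (n - j + d))) /
      (∏ i ∈ Finset.range n, (1 - (RatFunc.X : RatFunc ℚ) ^ ((n - i) * (i + d)))) =
    1 / ∏ i ∈ Finset.range n, (1 - (RatFunc.X : RatFunc ℚ) ^ (d + i)) := by
  have hX : (RatFunc.X : RatFunc ℚ) ≠ 0 := RatFunc.X_ne_zero
  have hden : ∏ i ∈ range n, (1 - (RatFunc.X : RatFunc ℚ) ^ ((n - i) * (i + d))) ≠ 0 :=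
    prod_ne_zero_iff.2 fun i hi => RatFunc.one_sub_X_pow_ne_zero
      (Nat.mul_ne_zero (Nat.sub_ne_zero_of_lt (mem_range.1 hi)) (by omega))
  have hden' : ∏ i ∈ range n, (1 - (RatFunc.X : RatFunc ℚ) ^ (d + i)) ≠ 0 :=
    prod_ne_zero_iff.2 fun i _ => RatFunc.one_sub_X_pow_ne_zero (by omega)
  simp only [inv_pow_lenP_mul_prod_pow_eq_zpow hX]
  rw [div_eq_div_iff hden hden', one_mul, sum_zpow_igusaWeight_mul_prod hX]

theorem stmt13 (n d : ℕ) (hn : 1 ≤ n) (hd : 1 ≤ d) :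
    (∑ w : Equiv.Perm (Fin n),
        ((RatFunc.X : RatFunc ℚ) ^ lenP w)⁻¹ *
          ∏ j ∈ desP w, (RatFunc.X : RatFunc ℚ) ^ (j * (n - j + d))) /
      (∏ i ∈ Finset.range n, (1 - (RatFunc.X : RatFunc ℚ) ^ ((n - i) * (i + d)))) =
    1 / ∏ i ∈ Finset.range n, (1 - (RatFunc.X : RatFunc ℚ) ^ (d + i)) :=
  stmt13_general n d hd
end
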